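/- arXiv:1003.4829 — 3 statements merged into one kernel-verified Lean document; each statement's English description precedes it below -/
import Mathlib

section
/- Let Ω be a finite set with at least two elements, and let G be a subgroup of the symmetric group Sym(Ω) that is solvable and acts primitively on Ω. Then the cardinality of Ω is a prime power: |Ω| = p^k for some prime p and some integer k ≥ 1. -/
/-!
A nontrivial finite solvable group has a nontrivial abelian normal subgroup (the last nontrivial
term of its derived series), and the Sylow `p`-subgroup of that abelian group, for any prime `p`
dividing its order, is characteristic in it, hence normal in `G`. In a primitive permutation
group every nontrivial normal subgroup is transitive, so `Ω` is a single orbit of a `p`-group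
and `|Ω|` is a power of `p`.
-/

open MulAction

def IsPreprimitiveAction (G X : Type*) [Group G] [MulAction G X] : Prop :=
  MulAction.IsPretransitive G X ∧
    ∀ B : Set X, MulAction.IsBlock G B → MulAction.IsTrivialBlock B

theorem IsPreprimitiveAction.isPreprimitive {G X : Type*} [Group G] [MulAction G X]
    (h : IsPreprimitiveAction G X) : IsPreprimitive G X :=
  have := h.1
  { isTrivialBlock_of_isBlock := h.2 _ }

theorem IsPretransitive.nontrivial {G X : Type*} [Group G] [MulAction G X] [IsPretransitive G X]
    [Nontrivial X] : Nontrivial G := by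
  obtain ⟨x, y, hxy⟩ := exists_pair_ne X
  obtain ⟨g, rfl⟩ := exists_smul_eq G x y
  exact ⟨⟨g, 1, fun h => hxy (by rw [h, one_smul])⟩⟩

theorem Group.IsSolvable.exists_normal_isMulCommutative_ne_bot {G : Type*} [Group G]
    [Group.IsSolvable G] [Nontrivial G] :
    ∃ A : Subgroup G, A.Normal ∧ IsMulCommutative A ∧ A ≠ ⊥ := by
  classical
  have hsol : ∃ n, derivedSeries G n = ⊥ := Group.IsSolvable.solvable
  obtain ⟨n, hn⟩ : ∃ n, Nat.find hsol = n + 1 := by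
    refine Nat.exists_eq_add_one.mpr (Nat.pos_of_ne_zero fun h0 => ?_)
    have := Nat.find_spec hsol
    rw [h0, derivedSeries_zero] at this
    exact top_ne_bot this
  refine ⟨derivedSeries G n, derivedSeries_normal G n, ?_, Nat.find_min hsol (by omega)⟩
  rw [← Subgroup.le_centralizer_iff_isMulCommutative,
    ← Subgroup.commutator_eq_bot_iff_le_centralizer, ← derivedSeries_succ, ← hn]
  exact Nat.find_spec hsol

theorem Subgroup.Normal.exists_normal_isPGroup_ne_bot {G : Type*} [Group G] [Finite G]
    {A : Subgroup G} (hA : A.Normal) [IsMulCommutative A] (hA₁ : A ≠ ⊥) :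
    ∃ p : ℕ, p.Prime ∧ ∃ P : Subgroup G, P.Normal ∧ IsPGroup p P ∧ P ≠ ⊥ := by
  set p := (Nat.card A).minFac
  have : Fact p.Prime := ⟨Nat.minFac_prime (A.one_lt_card_iff_ne_bot.mpr hA₁).ne'⟩
  obtain ⟨Q⟩ : Nonempty (Sylow p A) := inferInstance
  -- every subgroup of the abelian `A` is normal, so `Q` is characteristic in `A`
  have : (Q : Subgroup A).Characteristic := Sylow.characteristic_of_normal Q inferInstance
  refine ⟨p, Fact.out, (Q : Subgroup A).map A.subtype, inferInstance, Q.isPGroup'.map _, ?_⟩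
  rw [Ne, ← Subgroup.map_bot A.subtype, (Subgroup.map_injective A.subtype_injective).eq_iff]
  exact Q.ne_bot_of_dvd_card (Nat.minFac_dvd _)

theorem IsPGroup.card_eq_pow_of_isPreprimitive {G X : Type*} [Group G] [MulAction G X]
    [FaithfulSMul G X] [IsPreprimitive G X] [Finite X] {p : ℕ} [Fact p.Prime]
    {P : Subgroup G} [P.Normal] (hP : IsPGroup p P) (hP₁ : P ≠ ⊥) :
    ∃ n, Nat.card X = p ^ n := by
  have hmoved : fixedPoints P X ≠ Set.univ := by
    refine fun h => hP₁ ((Subgroup.eq_bot_iff_forall P).mpr fun g hg => ?_)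
    refine eq_of_smul_eq_smul (α := X) fun x => ?_
    rw [one_smul]
    exact (Set.eq_univ_iff_forall.mp h x : x ∈ fixedPoints P X) ⟨g, hg⟩
  obtain ⟨x, -⟩ := Set.ne_univ_iff_exists_notMem _ |>.mp hmoved
  have := IsQuasiPreprimitive.isPretransitive_of_normal hmoved
  obtain ⟨n, hn⟩ := hP.card_orbit x
  rw [orbit_eq_univ, Nat.card_univ] at hn
  exact ⟨n, hn⟩

/-- If `G` is a solvable subgroup of the symmetric group of a finite set `Ω` with at least
two elements, acting primitively on `Ω`, then `|Ω|` is a prime power `p ^ k` with `k ≥ 1`. -/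
theorem solvable_primitive_card_prime_pow {Ω : Type*} [Fintype Ω]
    (h2 : 2 ≤ Fintype.card Ω)
    (G : Subgroup (Equiv.Perm Ω)) (hsolv : IsSolvable G)
    (hprim : IsPreprimitiveAction G Ω) :
    ∃ (p k : ℕ), p.Prime ∧ 1 ≤ k ∧ Fintype.card Ω = p ^ k := by
  have := hprim.isPreprimitive
  have : Nontrivial Ω := Fintype.one_lt_card_iff_nontrivial.mp h2
  have : Nontrivial G := IsPretransitive.nontrivial (X := Ω)
  obtain ⟨A, hA, hAcomm, hA₁⟩ := hsolv.exists_normal_isMulCommutative_ne_bot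
  obtain ⟨p, hp, P, hPnormal, hP, hP₁⟩ := hA.exists_normal_isPGroup_ne_bot hA₁
  have : Fact p.Prime := ⟨hp⟩
  obtain ⟨k, hk⟩ := hP.card_eq_pow_of_isPreprimitive (X := Ω) hP₁
  rw [Nat.card_eq_fintype_card] at hk
  refine ⟨p, k, hp, Nat.one_le_iff_ne_zero.mpr fun hk₀ => ?_, hk⟩
  simp [hk, hk₀] at h2
end

section
/- Let Ω be a finite set with at least two elements, let G be a solvable subgroup of Sym(Ω) acting primitively on Ω, and let A be a minimal normal subgroup of G. Then A acts simply transitively (regularly) on Ω: for all x, y ∈ Ω there exists exactly one a ∈ A with a(x) = y. In particular, the cardinality of A equals the cardinality of Ω. -/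
/-- `A` is a minimal normal subgroup of `G`: it is nontrivial, normal, and the only normal
subgroup of `G` properly contained in it is the trivial one. -/
def IsMinimalNormal {G : Type*} [Group G] (A : Subgroup G) : Prop :=
  A ≠ ⊥ ∧ A.Normal ∧ ∀ B : Subgroup G, B.Normal → B < A → B = ⊥

/-!
In a solvable group a minimal normal subgroup `A` is abelian, since `⁅A, A⁆` is a normal subgroup
properly contained in `A`. In a primitive action the orbits of a normal subgroup are blocks, so
`A`, which acts nontrivially because the action is faithful, is transitive. Finally, a transitive
abelian group acting faithfully acts freely: an element fixing one point commutes with the elements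
carrying that point anywhere, hence fixes every point.
-/

open MulAction

theorem IsMinimalNormal.isMulCommutative {G : Type*} [Group G] [Group.IsSolvable G]
    {A : Subgroup G} (hA : IsMinimalNormal A) : IsMulCommutative A := by
  obtain ⟨hA_ne_bot, hA_normal, hA_min⟩ := hA
  rw [← Subgroup.commutator_self_eq_bot_iff]
  exact hA_min _ (Subgroup.commutator_normal A A)
    (Group.IsSolvable.commutator_lt_of_ne_bot hA_ne_bot)

theorem MulAction.fixedPoints_ne_univ {M X : Type*} [Monoid M] [MulAction M X]
    [FaithfulSMul M X] [Nontrivial M] : fixedPoints M X ≠ Set.univ := by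
  intro h
  obtain ⟨g, hg⟩ := exists_ne (1 : M)
  refine hg (eq_of_smul_eq_smul (α := X) fun x ↦ ?_)
  rw [one_smul]
  exact (h ▸ Set.mem_univ x : x ∈ fixedPoints M X) g

theorem MulAction.IsPretransitive.isCancelSMul {M X : Type*} [Group M] [IsMulCommutative M]
    [MulAction M X] [FaithfulSMul M X] [IsPretransitive M X] : IsCancelSMul M X := by
  refine isCancelSMul_iff_eq_one_of_smul_eq.mpr fun g x hgx ↦
    eq_of_smul_eq_smul (α := X) fun y ↦ ?_
  obtain ⟨h, rfl⟩ := MulAction.exists_smul_eq M x y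
  rw [one_smul, smul_smul, mul_comm', mul_smul, hgx]

section Regular

variable {M X : Type*} [Monoid M] [MulAction M X] [IsPretransitive M X] [IsCancelSMul M X]

theorem MulAction.existsUnique_smul_eq (x y : X) : ∃! g : M, g • x = y := by
  obtain ⟨g, hg⟩ := exists_smul_eq M x y
  exact ⟨g, hg, fun h hh ↦ IsCancelSMul.right_cancel _ _ x (hh.trans hg.symm)⟩

theorem MulAction.card_eq_card_of_isCancelSMul [Nonempty X] : Nat.card M = Nat.card X := by
  obtain ⟨x⟩ := ‹Nonempty X›
  exact Nat.card_eq_of_bijective (fun g : M ↦ g • x)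
    ⟨fun g h ↦ IsCancelSMul.right_cancel g h x, fun y ↦ exists_smul_eq M x y⟩

end Regular

theorem minimal_normal_acts_regularly_general {Ω : Type*} [Fintype Ω]
    (G : Subgroup (Equiv.Perm Ω)) (hsolv : IsSolvable G)
    (hprim : IsPreprimitiveAction G Ω)
    (A : Subgroup G) (hA : IsMinimalNormal A) :
    (∀ x y : Ω, ∃! a : A, ((a : G) : Equiv.Perm Ω) x = y) ∧
      Nat.card A = Fintype.card Ω := by
  have : Group.IsSolvable G := hsolv
  have := hprim.isPreprimitive
  have := hA.isMulCommutative
  obtain ⟨hA_ne_bot, hA_normal, -⟩ := hA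
  have : Nontrivial A := (Subgroup.nontrivial_iff_ne_bot A).mpr hA_ne_bot
  have hA_moves : fixedPoints A Ω ≠ Set.univ := fixedPoints_ne_univ
  have : IsPretransitive A Ω := IsQuasiPreprimitive.isPretransitive_of_normal hA_moves
  have : IsCancelSMul A Ω := IsPretransitive.isCancelSMul
  obtain ⟨x, -⟩ := Set.ne_univ_iff_exists_notMem _ |>.mp hA_moves
  have : Nonempty Ω := ⟨x⟩
  exact ⟨existsUnique_smul_eq, card_eq_card_of_isCancelSMul.trans Nat.card_eq_fintype_card⟩

/-- If `G` is a solvable subgroup of the symmetric group of a finite set `Ω` with at least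
two elements, acting primitively on `Ω`, and `A` is a minimal normal subgroup of `G`, then
`A` acts simply transitively (regularly) on `Ω`; in particular `|A| = |Ω|`. -/
theorem minimal_normal_acts_regularly {Ω : Type*} [Fintype Ω]
    (h2 : 2 ≤ Fintype.card Ω)
    (G : Subgroup (Equiv.Perm Ω)) (hsolv : IsSolvable G)
    (hprim : IsPreprimitiveAction G Ω)
    (A : Subgroup G) (hA : IsMinimalNormal A) :
    (∀ x y : Ω, ∃! a : A, ((a : G) : Equiv.Perm Ω) x = y) ∧
      Nat.card A = Fintype.card Ω :=
  minimal_normal_acts_regularly_general G hsolv hprim A hA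
end

section
/- (Zariski) Let Ω be a finite set with |Ω| = p^k for a prime p and integer k ≥ 1, and let G be a solvable subgroup of Sym(Ω) acting primitively on Ω. For g ∈ G with g ≠ 1, let r(g) denote the number of orbits of the cyclic subgroup generated by g on Ω (the number of cycles of g, counting fixed points as cycles of length 1), and set b(g) = |Ω| − r(g). Then 2·b(g) ≥ p^k − p^{k-1}. -/
/-!
Every orbit of `⟨g⟩` that is not a fixed point has at least two points, so
`2 r ≤ |Ω| + |Fix g|`, and it suffices to show `|Fix g| ≤ p ^ (k - 1)`. The last nontrivial term
`N` of the derived series of `G` is an abelian normal subgroup; by primitivity it is transitive,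
hence regular, so `|N| = p ^ k`. If `g` fixes `x₀`, then `n ↦ n • x₀` maps the centraliser of `g`
in `N` bijectively onto `Fix g`, and this centraliser is a proper subgroup of `N` because `g ≠ 1`.
-/

open MulAction Subgroup Function Finset

theorem MulAction.two_mul_card_orbitRel_quotient_le (H α : Type*) [Group H] [MulAction H α]
    [Finite α] :
    2 * Nat.card (orbitRel.Quotient H α) ≤ Nat.card α + Nat.card (fixedPoints H α) := by
  classical
  have := Fintype.ofFinite α
  let q : α → orbitRel.Quotient H α := Quotient.mk _
  let F : Finset α := (fixedPoints H α).toFinset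
  have hmoved : 2 * #(Fᶜ.image q) ≤ #Fᶜ := by
    refine mul_card_image_le_card _ 2 fun ω hω ↦ ?_
    obtain ⟨x, hx, rfl⟩ := mem_image.mp hω
    obtain ⟨h, hh⟩ : ∃ h : H, h • x ≠ x := by simpa [F, mem_fixedPoints] using hx
    have hhx : h • x ∈ Fᶜ := by
      simp only [F, mem_compl, Set.mem_toFinset, mem_fixedPoints, not_forall]
      exact ⟨h⁻¹, by rw [inv_smul_smul]; exact hh.symm⟩
    refine one_lt_card.mpr ⟨h • x, ?_, x, ?_, hh⟩
    · exact mem_filter.mpr ⟨hhx, Quotient.sound (mem_orbit x h)⟩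
    · exact mem_filter.mpr ⟨hx, rfl⟩
  have hcover : Nat.card (orbitRel.Quotient H α) ≤ #F + #(Fᶜ.image q) :=
    calc Nat.card (orbitRel.Quotient H α)
        = #(univ.image q) := by
          rw [image_univ_of_surjective Quotient.mk_surjective, card_univ, Nat.card_eq_fintype_card]
      _ = #(F.image q ∪ Fᶜ.image q) := by rw [← image_union, union_compl]
      _ ≤ #F + #(Fᶜ.image q) := (card_union_le _ _).trans (Nat.add_le_add_right card_image_le _)
  rw [card_compl, ← Nat.card_eq_fintype_card] at hmoved
  have hF : #F = Nat.card (fixedPoints H α) := (Nat.card_eq_card_toFinset _).symm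
  have hFle : #F ≤ Nat.card α := Nat.card_eq_fintype_card (α := α) ▸ card_le_univ F
  omega

theorem MulAction.fixedPoints_zpowers {G α : Type*} [Group G] [MulAction G α] (g : G) :
    fixedPoints (zpowers g) α = fixedBy α g := by
  ext x
  exact ⟨fun h ↦ h ⟨g, mem_zpowers g⟩, fun h ⟨_, m, rfl⟩ ↦ mem_fixedBy_zpow h m⟩

theorem Group.IsSolvable.exists_normal_isMulCommutative {G : Type*} [Group G] [Group.IsSolvable G]
    [Nontrivial G] : ∃ A : Subgroup G, A.Normal ∧ A ≠ ⊥ ∧ IsMulCommutative A := by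
  classical
  have hex : ∃ n, derivedSeries G n = ⊥ := Group.IsSolvable.solvable
  have hm : Nat.find hex ≠ 0 := by
    intro h
    have := Nat.find_spec hex
    rw [h, derivedSeries_zero] at this
    exact top_ne_bot this
  obtain ⟨m, hm⟩ := Nat.exists_eq_add_one_of_ne_zero hm
  refine ⟨derivedSeries G m, derivedSeries_normal G m, Nat.find_min hex (by omega), ?_⟩
  rw [← le_centralizer_iff_isMulCommutative, ← commutator_eq_bot_iff_le_centralizer,
    ← derivedSeries_succ, ← hm]
  exact Nat.find_spec hex

theorem Subgroup.card_le_pow_pred_of_lt {G : Type*} [Group G] {H K : Subgroup G} {p k : ℕ}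
    (hp : p.Prime) (hK : Nat.card K = p ^ k) (hHK : H < K) : Nat.card H ≤ p ^ (k - 1) := by
  have : Finite K := Nat.finite_of_card_ne_zero (hK ▸ pow_ne_zero k hp.ne_zero)
  obtain ⟨i, hik, hi⟩ := (Nat.dvd_prime_pow hp).mp (hK ▸ card_dvd_of_le hHK.le)
  have hik : i ≠ k := fun h ↦ hHK.ne (eq_of_le_of_card_ge hHK.le (by rw [hK, hi, h]))
  rw [hi]
  exact Nat.pow_le_pow_right hp.pos (by omega)

theorem MulAction.bijective_smul_of_isMulCommutative {A X : Type*} [Group A] [IsMulCommutative A]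
    [MulAction A X] [FaithfulSMul A X] [IsPretransitive A X] (x : X) :
    Bijective fun a : A ↦ a • x := by
  refine ⟨fun a b hab ↦ eq_of_smul_eq_smul (α := X) fun y ↦ ?_, exists_smul_eq A x⟩
  obtain ⟨c, rfl⟩ := exists_smul_eq A x y
  calc a • c • x = c • a • x := by rw [smul_smul, mul_comm', mul_smul]
    _ = c • b • x := congrArg (c • ·) hab
    _ = b • c • x := by rw [smul_smul, mul_comm', mul_smul]

theorem MulAction.fixedPoints_ne_univ_of_ne_bot {G X : Type*} [Group G] [MulAction G X]
    [FaithfulSMul G X] {N : Subgroup G} (hN : N ≠ ⊥) : fixedPoints N X ≠ Set.univ := by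
  obtain ⟨n, hn⟩ := N.ne_bot_iff_exists_ne_one.mp hN
  obtain ⟨x, hx⟩ : ∃ x : X, n • x ≠ x := by
    by_contra! h
    exact hn (eq_of_smul_eq_smul (α := X) fun x ↦ by rw [h, one_smul])
  exact fun h ↦ hx ((h ▸ Set.mem_univ x : x ∈ fixedPoints N X) n)

section RegularNormal

variable {G X : Type*} [Group G] [MulAction G X] {N : Subgroup G} {x₀ : X} {g : G}

theorem MulAction.card_fixedBy_eq_card_inf_centralizer [N.Normal]
    (hreg : Bijective fun n : N ↦ n • x₀) (hx₀ : x₀ ∈ fixedBy X g) :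
    Nat.card (fixedBy X g) = Nat.card ↥(N ⊓ centralizer {g}) := by
  rw [mem_fixedBy] at hx₀
  have hfix (c : ↥(N ⊓ centralizer {g})) : (c : G) • x₀ ∈ fixedBy X g := by
    rw [mem_fixedBy, smul_smul, ← mem_centralizer_singleton_iff.mp (mem_inf.mp c.2).2, mul_smul,
      hx₀]
  symm
  refine Nat.card_eq_of_bijective (fun c ↦ ⟨(c : G) • x₀, hfix c⟩) ⟨fun c c' h ↦ ?_, fun x ↦ ?_⟩
  · have := @hreg.1 ⟨c, (mem_inf.mp c.2).1⟩ ⟨c', (mem_inf.mp c'.2).1⟩ (congrArg Subtype.val h)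
    simpa only [Subtype.ext_iff] using this
  · obtain ⟨n, hn⟩ := hreg.2 x
    have hnx : (n : G) • x₀ = x := hn
    have hconj : (⟨g * n * g⁻¹, ‹N.Normal›.conj_mem n n.2 g⟩ : N) = n := hreg.1 <|
      calc (g * n * g⁻¹) • x₀ = g • (n : G) • x₀ := by
            rw [mul_smul, mul_smul, inv_smul_eq_iff.mpr hx₀.symm]
        _ = (n : G) • x₀ := by rw [hnx, mem_fixedBy.mp x.2]
    have hcomm : (n : G) * g = g * n := (mul_inv_eq_iff_eq_mul.mp (congrArg Subtype.val hconj)).symm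
    exact ⟨⟨n, mem_inf.mpr ⟨n.2, mem_centralizer_singleton_iff.mpr hcomm⟩⟩, Subtype.ext hnx⟩

theorem MulAction.inf_centralizer_lt_of_ne_one [FaithfulSMul G X]
    (hsurj : Surjective fun n : N ↦ n • x₀) (hx₀ : x₀ ∈ fixedBy X g) (hg : g ≠ 1) :
    N ⊓ centralizer {g} < N := by
  refine inf_le_left.lt_of_ne fun h ↦ hg (eq_of_smul_eq_smul (α := X) fun y ↦ ?_)
  obtain ⟨n, rfl⟩ := hsurj y
  have hn : (n : G) * g = g * n := mem_centralizer_singleton_iff.mp (inf_eq_left.mp h n.2)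
  show g • (n : G) • x₀ = (1 : G) • (n : G) • x₀
  rw [smul_smul, ← hn, mul_smul, mem_fixedBy.mp hx₀, one_smul]

end RegularNormal

theorem MulAction.IsPreprimitive.card_fixedBy_le {G X : Type*} [Group G] [MulAction G X]
    [FaithfulSMul G X] [IsPreprimitive G X] [Group.IsSolvable G] {p k : ℕ} (hp : p.Prime)
    (hX : Nat.card X = p ^ k) {g : G} (hg : g ≠ 1) :
    Nat.card (fixedBy X g) ≤ p ^ (k - 1) := by
  have : Nontrivial G := ⟨⟨g, 1, hg⟩⟩
  obtain ⟨N, hN, hN_ne, hN_comm⟩ := Group.IsSolvable.exists_normal_isMulCommutative (G := G)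
  have : IsPretransitive N X :=
    IsQuasiPreprimitive.isPretransitive_of_normal (fixedPoints_ne_univ_of_ne_bot hN_ne)
  rcases (fixedBy X g).eq_empty_or_nonempty with hempty | ⟨x₀, hx₀⟩
  · simp [hempty]
  have hreg := bijective_smul_of_isMulCommutative (A := N) x₀
  rw [card_fixedBy_eq_card_inf_centralizer hreg hx₀]
  exact card_le_pow_pred_of_lt hp ((Nat.card_eq_of_bijective _ hreg).trans hX)
    (inf_centralizer_lt_of_ne_one hreg.2 hx₀ hg)

theorem zariski_branch_multiplicity_bound_general {Ω : Type*} [Fintype Ω]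
    (p k : ℕ) (hp : p.Prime) (hcard : Fintype.card Ω = p ^ k)
    (G : Subgroup (Equiv.Perm Ω)) (hsolv : IsSolvable G)
    (hprim : IsPreprimitiveAction G Ω)
    (g : Equiv.Perm Ω) (hg : g ∈ G) (hne : g ≠ 1)
    (r b : ℕ)
    (hr : r = Nat.card (MulAction.orbitRel.Quotient (Subgroup.zpowers g) Ω))
    (hb : b = Fintype.card Ω - r) :
    p ^ k - p ^ (k - 1) ≤ 2 * b := by
  have : IsPreprimitive G Ω := { hprim.1 with isTrivialBlock_of_isBlock := hprim.2 _ }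
  have : Group.IsSolvable G := hsolv
  have hne' : (⟨g, hg⟩ : G) ≠ 1 := by simpa using hne
  have hfix : Nat.card (fixedBy Ω g) ≤ p ^ (k - 1) :=
    IsPreprimitive.card_fixedBy_le (G := G) hp (Nat.card_eq_fintype_card.trans hcard) hne'
  have hcount := two_mul_card_orbitRel_quotient_le (zpowers g) Ω
  rw [fixedPoints_zpowers, Nat.card_eq_fintype_card (α := Ω), hcard, ← hr] at hcount
  rw [hcard] at hb
  have hpow : p ^ (k - 1) ≤ p ^ k := Nat.pow_le_pow_right hp.pos (Nat.sub_le k 1)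
  omega

/-- (Zariski) Let `G` be a solvable subgroup of the symmetric group of a finite set `Ω`
with `|Ω| = p ^ k` (`p` prime, `k ≥ 1`), acting primitively on `Ω`. For `g ∈ G`, `g ≠ 1`,
let `r` be the number of orbits of the cyclic subgroup generated by `g` on `Ω` and
`b = |Ω| - r`. Then `2 * b ≥ p ^ k - p ^ (k - 1)`. -/
theorem zariski_branch_multiplicity_bound {Ω : Type*} [Fintype Ω]
    (p k : ℕ) (hp : p.Prime) (hk : 1 ≤ k) (hcard : Fintype.card Ω = p ^ k)
    (G : Subgroup (Equiv.Perm Ω)) (hsolv : IsSolvable G)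
    (hprim : IsPreprimitiveAction G Ω)
    (g : Equiv.Perm Ω) (hg : g ∈ G) (hne : g ≠ 1)
    (r b : ℕ)
    (hr : r = Nat.card (MulAction.orbitRel.Quotient (Subgroup.zpowers g) Ω))
    (hb : b = Fintype.card Ω - r) :
    p ^ k - p ^ (k - 1) ≤ 2 * b :=
  zariski_branch_multiplicity_bound_general p k hp hcard G hsolv hprim g hg hne r b hr hb
end
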